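/- Let σ, ω be real numbers with σ > 0 and ω > 0. Then for every x ∈ ℝ, ∫_ℝ cos(xξ)/(ξ⁴ − 2(ω²−σ²)ξ² + (σ²+ω²)²) dξ = (π e^{−σ|x|}/(2σω(σ²+ω²))) · ( ω cos(ωx) + σ sin(ω|x|) ). -/

import Mathlib

open MeasureTheory

open MeasureTheory Complex Set Filter
open scoped Real FourierTransform Topology

namespace KernelOsc

noncomputable def D (σ ω t : ℝ) : ℝ := t^4 - 2*(ω^2-σ^2)*t^2 + (σ^2+ω^2)^2

noncomputable def f (σ ω : ℝ) (y : ℝ) : ℂ :=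
  (((ω/2 : ℝ) : ℂ) - ((σ/2 : ℝ) : ℂ)*I) * Complex.exp ((-(σ:ℂ) + (ω:ℂ)*I) * (|y| : ℝ))
  + (((ω/2 : ℝ) : ℂ) + ((σ/2 : ℝ) : ℂ)*I) * Complex.exp ((-(σ:ℂ) - (ω:ℂ)*I) * (|y| : ℝ))

lemma integrableOn_cexp_Ioi {d : ℂ} (hd : d.re < 0) :
    IntegrableOn (fun y : ℝ => Complex.exp (d * y)) (Set.Ioi (0:ℝ)) := by
  refine Integrable.mono' (exp_neg_integrableOn_Ioi 0 (neg_pos.mpr hd)) ?_ ?_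
  · exact (Complex.continuous_exp.comp
      (continuous_const.mul Complex.continuous_ofReal)).aestronglyMeasurable
  · filter_upwards with y
    rw [Complex.norm_exp]
    simp [Complex.mul_re]

lemma integral_cexp_Ioi {d : ℂ} (hd : d.re < 0) :
    ∫ y : ℝ in Set.Ioi (0:ℝ), Complex.exp (d * y) = -d⁻¹ := by
  have hd0 : d ≠ 0 := fun h => by simp [h] at hd
  have key : ∀ x : ℝ, HasDerivAt (fun y : ℝ => d⁻¹ * Complex.exp (d * y))
      (Complex.exp (d * x)) x := by
    intro x
    have h2 : HasDerivAt (fun z : ℂ => d⁻¹ * Complex.exp (d * z))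
        (d⁻¹ * (Complex.exp (d * x) * d)) (x : ℂ) := by
      exact (((Complex.hasDerivAt_exp ((d:ℂ) * x)).comp (x:ℂ)
        ((hasDerivAt_id (x:ℂ)).const_mul d)).const_mul d⁻¹).congr_deriv (by ring)
    have := h2.comp_ofReal
    convert this using 1
    field_simp
  have tt : Tendsto (fun y : ℝ => d⁻¹ * Complex.exp (d * y)) atTop (𝓝 0) := by
    rw [tendsto_zero_iff_norm_tendsto_zero]
    have h1 : Tendsto (fun y : ℝ => ‖d⁻¹‖ * Real.exp (d.re * y)) atTop (𝓝 (‖d⁻¹‖ * 0)) := by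
      exact (Real.tendsto_exp_atBot.comp
        ((tendsto_const_mul_atBot_of_neg hd).mpr tendsto_id)).const_mul _
    rw [mul_zero] at h1
    convert h1 using 2 with y
    rw [norm_mul]
    congr 1
    rw [Complex.norm_exp]
    simp [Complex.mul_re]
  have := integral_Ioi_of_hasDerivAt_of_tendsto' (f' := fun y : ℝ => Complex.exp (d * y))
    (fun x _ => key x) (integrableOn_cexp_Ioi hd) tt
  rw [this]
  simp

lemma integrableOn_cexp_Iic {d : ℂ} (hd : 0 < d.re) :
    IntegrableOn (fun y : ℝ => Complex.exp (d * y)) (Set.Iic (0:ℝ)) := by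
  have h := integrableOn_cexp_Ioi (d := -d) (by simpa using hd)
  rw [← Measure.map_neg_eq_self (volume : Measure ℝ)]
  have m : MeasurableEmbedding fun x : ℝ => -x := (Homeomorph.neg ℝ).measurableEmbedding
  rw [m.integrableOn_map_iff]
  simp_rw [Function.comp_def, neg_preimage, neg_Iic, neg_zero]
  refine (Iff.mpr integrableOn_Ici_iff_integrableOn_Ioi) (h.congr_fun (fun y _ => ?_) measurableSet_Ioi)
  push_cast
  ring_nf

lemma integral_cexp_Iic {d : ℂ} (hd : 0 < d.re) :
    ∫ y : ℝ in Set.Iic (0:ℝ), Complex.exp (d * y) = d⁻¹ := by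
  have h := integral_comp_neg_Iic (0:ℝ) (fun x : ℝ => Complex.exp (-d * x))
  simp only [neg_zero] at h
  have e1 : ∀ y : ℝ, Complex.exp (-d * ↑(-y)) = Complex.exp (d * y) := by
    intro y; congr 1; push_cast; ring
  simp only [e1] at h
  rw [h, integral_cexp_Ioi (by simpa using hd), inv_neg, neg_neg]

lemma integrable_cexp_abs {c : ℂ} (hc : c.re < 0) (s : ℝ) :
    Integrable (fun y : ℝ => Complex.exp (c * |y| + (s * y) * I)) := by
  have hIoi : IntegrableOn (fun y : ℝ => Complex.exp (c * |y| + (s * y) * I)) (Ioi 0) :=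
    (integrableOn_cexp_Ioi (d := c + s*I) (by simpa using hc)).congr_fun
      (fun y hy => by rw [abs_of_pos hy]; congr 1; ring) measurableSet_Ioi
  have hIic : IntegrableOn (fun y : ℝ => Complex.exp (c * |y| + (s * y) * I)) (Iic 0) :=
    (integrableOn_cexp_Iic (d := (s:ℂ)*I - c) (by simpa using hc)).congr_fun
      (fun y hy => by rw [abs_of_nonpos hy]; congr 1; push_cast; ring) measurableSet_Iic
  rw [← integrableOn_univ, ← Set.Iic_union_Ioi (a := (0:ℝ)), integrableOn_union]
  exact ⟨hIic, hIoi⟩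

lemma integral_cexp_abs {c : ℂ} (hc : c.re < 0) (s : ℝ) :
    ∫ y : ℝ, Complex.exp (c * |y| + (s * y) * I)
      = ((s:ℂ)*I - c)⁻¹ - (c + s*I)⁻¹ := by
  have hIoi : IntegrableOn (fun y : ℝ => Complex.exp (c * |y| + (s * y) * I)) (Ioi 0) :=
    (integrableOn_cexp_Ioi (d := c + s*I) (by simpa using hc)).congr_fun
      (fun y hy => by rw [abs_of_pos hy]; congr 1; ring) measurableSet_Ioi
  have hIic : IntegrableOn (fun y : ℝ => Complex.exp (c * |y| + (s * y) * I)) (Iic 0) :=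
    (integrableOn_cexp_Iic (d := (s:ℂ)*I - c) (by simpa using hc)).congr_fun
      (fun y hy => by rw [abs_of_nonpos hy]; congr 1; push_cast; ring) measurableSet_Iic
  rw [← setIntegral_univ, ← Set.Iic_union_Ioi (a := (0:ℝ)),
    setIntegral_union (Iic_disjoint_Ioi le_rfl) measurableSet_Ioi hIic hIoi]
  have e1 : ∫ y in Iic (0:ℝ), Complex.exp (c * |y| + (s * y) * I)
      = ((s:ℂ)*I - c)⁻¹ := by
    rw [setIntegral_congr_fun measurableSet_Iic
      (fun y (hy : y ≤ 0) => by rw [abs_of_nonpos hy]; congr 1; push_cast; ring :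
        EqOn _ (fun y : ℝ => Complex.exp (((s:ℂ)*I - c) * y)) _)]
    exact integral_cexp_Iic (by simpa using hc)
  have e2 : ∫ y in Ioi (0:ℝ), Complex.exp (c * |y| + (s * y) * I)
      = -(c + s*I)⁻¹ := by
    rw [setIntegral_congr_fun measurableSet_Ioi
      (fun y (hy : 0 < y) => by rw [abs_of_pos hy]; congr 1; ring :
        EqOn _ (fun y : ℝ => Complex.exp ((c + (s:ℂ)*I) * y)) _)]
    exact integral_cexp_Ioi (by simpa using hc)
  rw [e1, e2]
  ring

lemma inv_formula (a b : ℝ) (ha : a ≠ 0) :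
    (((a:ℂ) + (b:ℂ)*I))⁻¹ = ((a/(a^2+b^2) : ℝ) : ℂ) - ((b/(a^2+b^2) : ℝ) : ℂ)*I := by
  rw [Complex.inv_def, Complex.normSq_add_mul_I, map_add, Complex.conj_ofReal, map_mul,
    Complex.conj_ofReal, Complex.conj_I]
  push_cast
  ring

lemma D_pos {σ : ℝ} (hσ : 0 < σ) (ω t : ℝ) : (0:ℝ) < D σ ω t := by
  have h : D σ ω t = ((t-ω)^2+σ^2)*((t+ω)^2+σ^2) := by unfold D; ring
  rw [h]; positivity

lemma alg {σ ω : ℝ} (hσ : 0 < σ) (t : ℝ) :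
    ((ω/2 : ℝ) - (σ/2 : ℝ)*I) * ((((-t : ℝ):ℂ)*I - (-(σ:ℂ) + (ω:ℂ)*I))⁻¹ - ((-(σ:ℂ) + (ω:ℂ)*I) + ((-t:ℝ):ℂ)*I)⁻¹)
    + ((ω/2 : ℝ) + (σ/2 : ℝ)*I) * ((((-t : ℝ):ℂ)*I - (-(σ:ℂ) - (ω:ℂ)*I))⁻¹ - ((-(σ:ℂ) - (ω:ℂ)*I) + ((-t:ℝ):ℂ)*I)⁻¹)
    = ((4*σ*ω*(σ^2+ω^2) / D σ ω t : ℝ) : ℂ) := by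
  have hσ' : σ ≠ 0 := ne_of_gt hσ
  have hσ'' : -σ ≠ 0 := neg_ne_zero.mpr hσ'
  have hD : (0:ℝ) < D σ ω t := D_pos hσ ω t
  have e1 : (((-t : ℝ):ℂ)*I - (-(σ:ℂ) + (ω:ℂ)*I)) = (σ:ℂ) + ((-(t+ω) : ℝ):ℂ)*I := by
    push_cast; ring
  have e2 : ((-(σ:ℂ) + (ω:ℂ)*I) + ((-t:ℝ):ℂ)*I) = ((-σ : ℝ):ℂ) + ((ω - t : ℝ):ℂ)*I := by
    push_cast; ring
  have e3 : (((-t : ℝ):ℂ)*I - (-(σ:ℂ) - (ω:ℂ)*I)) = (σ:ℂ) + ((ω - t : ℝ):ℂ)*I := by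
    push_cast; ring
  have e4 : ((-(σ:ℂ) - (ω:ℂ)*I) + ((-t:ℝ):ℂ)*I) = ((-σ : ℝ):ℂ) + ((-(ω + t) : ℝ):ℂ)*I := by
    push_cast; ring
  rw [e1, e2, e3, e4, inv_formula σ _ hσ', inv_formula (-σ) _ hσ'', inv_formula σ _ hσ',
    inv_formula (-σ) _ hσ'']
  have hD' : t^4 - 2*(ω^2-σ^2)*t^2 + (σ^2+ω^2)^2 ≠ 0 := by
    have h : D σ ω t = t^4 - 2*(ω^2-σ^2)*t^2 + (σ^2+ω^2)^2 := rfl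
    rw [h] at hD; exact ne_of_gt hD
  have hD'' : t ^ 2 * (t ^ 2 - 2 * (ω ^ 2 - σ ^ 2)) + (σ ^ 2 + ω ^ 2) ^ 2 ≠ 0 := by
    convert hD' using 1; ring
  apply Complex.ext <;>
    simp only [Complex.mul_re, Complex.mul_im, Complex.add_re, Complex.add_im, Complex.sub_re,
      Complex.sub_im, Complex.ofReal_re, Complex.ofReal_im, Complex.I_re, Complex.I_im,
      mul_zero, zero_mul, mul_one, sub_zero, zero_sub, add_zero, zero_add, neg_zero, neg_neg] <;>
  · try unfold D
    field_simp
    ring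

lemma f_re (σ ω x : ℝ) : (f σ ω x).re
    = Real.exp (-σ*|x|) * (ω * Real.cos (ω*x) + σ * Real.sin (ω*|x|)) := by
  have hcos : Real.cos (ω*|x|) = Real.cos (ω*x) := by
    rcases abs_cases x with ⟨h,_⟩ | ⟨h,_⟩ <;> simp [h, mul_neg, Real.cos_neg]
  simp only [f, Complex.add_re, Complex.mul_re, Complex.mul_im, Complex.sub_re, Complex.sub_im,
    Complex.add_im, Complex.ofReal_re, Complex.ofReal_im, Complex.I_re, Complex.I_im,
    Complex.exp_re, Complex.exp_im, Complex.neg_re, Complex.neg_im,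
    mul_zero, zero_mul, mul_one, sub_zero, zero_sub, add_zero, zero_add, neg_zero, neg_neg]
  rw [← hcos]
  ring_nf
  rw [Real.cos_neg, Real.sin_neg]
  ring

lemma f_cont (σ ω : ℝ) : Continuous (f σ ω) := by
  unfold f; fun_prop

variable {σ ω : ℝ}

lemma hre1 (hσ : 0 < σ) : (-(σ:ℂ) + (ω:ℂ)*I).re < 0 := by simp [hσ]
lemma hre2 (hσ : 0 < σ) : (-(σ:ℂ) - (ω:ℂ)*I).re < 0 := by simp [hσ]

lemma f_int (hσ : 0 < σ) : Integrable (f σ ω) := by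
  have h1 := (integrable_cexp_abs (hre1 (ω := ω) hσ) 0).const_mul
    (((ω/2 : ℝ) : ℂ) - ((σ/2 : ℝ) : ℂ)*I)
  have h2 := (integrable_cexp_abs (hre2 (ω := ω) hσ) 0).const_mul
    (((ω/2 : ℝ) : ℂ) + ((σ/2 : ℝ) : ℂ)*I)
  have := h1.add h2
  apply this.congr
  filter_upwards with y
  unfold f
  norm_num

lemma fourier_f (hσ : 0 < σ) (ξ : ℝ) :
    𝓕 (f σ ω) ξ = ((4*σ*ω*(σ^2+ω^2) / D σ ω (2*π*ξ) : ℝ) : ℂ) := by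
  rw [Real.fourier_real_eq_integral_exp_smul]
  have key : ∀ v : ℝ, Complex.exp (↑(-2*π*v*ξ) * I) • f σ ω v
      = (((ω/2 : ℝ) : ℂ) - ((σ/2 : ℝ) : ℂ)*I)
          * Complex.exp ((-(σ:ℂ) + (ω:ℂ)*I) * |v| + (((-(2*π*ξ) : ℝ) : ℂ) * v) * I)
      + (((ω/2 : ℝ) : ℂ) + ((σ/2 : ℝ) : ℂ)*I)
          * Complex.exp ((-(σ:ℂ) - (ω:ℂ)*I) * |v| + (((-(2*π*ξ) : ℝ) : ℂ) * v) * I) := by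
    intro v
    have e : ∀ c : ℂ, c * (|v| : ℝ) + (((-(2*π*ξ) : ℝ) : ℂ) * v) * I
        = c * (|v| : ℝ) + ((↑(-2*π*v*ξ)) * I) := by
      intro c; congr 1; push_cast; ring
    rw [smul_eq_mul, e, e, Complex.exp_add, Complex.exp_add]
    unfold f
    ring
  simp only [key]
  rw [integral_add ((integrable_cexp_abs (hre1 hσ) _).const_mul _)
      ((integrable_cexp_abs (hre2 hσ) _).const_mul _),
    integral_const_mul, integral_const_mul,
    integral_cexp_abs (hre1 hσ) _, integral_cexp_abs (hre2 hσ) _]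
  have := alg (ω := ω) hσ (2*π*ξ)
  convert this using 4

lemma int_aux (hσ : 0 < σ) (hω : 0 < ω) :
    Integrable (fun ξ : ℝ => 4*σ*ω*(σ^2+ω^2) / D σ ω (2*π*ξ)) := by
  have hm : (0:ℝ) < min 1 (σ^2+ω^2) := by positivity
  have hC : (0:ℝ) < 4*σ*ω*(σ^2+ω^2) := by positivity
  refine Integrable.mono'
    ((integrable_inv_one_add_sq).const_mul (4*σ*ω*(σ^2+ω^2) / (σ^2 * min 1 (σ^2+ω^2)))) ?_ ?_
  · apply Continuous.aestronglyMeasurable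
    apply Continuous.div continuous_const
    · unfold D; fun_prop
    · exact fun ξ => (D_pos hσ ω (2*π*ξ)).ne'
  · filter_upwards with ξ
    have hDp := D_pos hσ ω (2*π*ξ)
    rw [Real.norm_eq_abs, _root_.abs_of_nonneg (le_of_lt (div_pos hC hDp))]
    have h1 : σ^2*((2*π*ξ)^2 + σ^2+ω^2) ≤ D σ ω (2*π*ξ) := by
      unfold D
      nlinarith [sq_nonneg ((2*π*ξ)^2-ω^2), sq_nonneg (σ*(2*π*ξ)), sq_nonneg (σ*ω)]
    have hπ2 : (1:ℝ) ≤ 4*π^2 := by nlinarith [Real.pi_gt_three]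
    have h2 : ξ^2 ≤ (2*π*ξ)^2 := by nlinarith [mul_le_mul_of_nonneg_right hπ2 (sq_nonneg ξ)]
    have h3 : σ^2 * (min 1 (σ^2+ω^2) * (1+ξ^2)) ≤ D σ ω (2*π*ξ) := by
      have ha := min_le_left (1:ℝ) (σ^2+ω^2)
      have hb := min_le_right (1:ℝ) (σ^2+ω^2)
      have key : min 1 (σ^2+ω^2) * (1+ξ^2) ≤ (2*π*ξ)^2 + σ^2+ω^2 := by
        nlinarith [mul_le_mul_of_nonneg_right ha (sq_nonneg ξ), hb, h2]
      calc σ^2 * (min 1 (σ^2+ω^2) * (1+ξ^2)) ≤ σ^2*((2*π*ξ)^2 + σ^2+ω^2) :=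
            mul_le_mul_of_nonneg_left key (sq_nonneg σ)
        _ ≤ D σ ω (2*π*ξ) := h1
    have h4 : (0:ℝ) < σ^2 * (min 1 (σ^2+ω^2) * (1+ξ^2)) := by positivity
    calc 4*σ*ω*(σ^2+ω^2) / D σ ω (2*π*ξ)
        ≤ 4*σ*ω*(σ^2+ω^2) / (σ^2 * (min 1 (σ^2+ω^2) * (1+ξ^2))) := by
          exact div_le_div_of_nonneg_left (le_of_lt hC) h4 h3
      _ = 4*σ*ω*(σ^2+ω^2) / (σ^2 * min 1 (σ^2+ω^2)) * (1+ξ^2)⁻¹ := by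
          field_simp

lemma fourier_f_int (hσ : 0 < σ) (hω : 0 < ω) : Integrable (𝓕 (f σ ω)) := by
  have heq : 𝓕 (f σ ω) = fun ξ : ℝ => ((4*σ*ω*(σ^2+ω^2) / D σ ω (2*π*ξ) : ℝ) : ℂ) :=
    funext (fourier_f hσ)
  rw [heq]
  exact (int_aux hσ hω).ofReal

end KernelOsc

open KernelOsc


/-- Explicit Fourier inversion integral for the kernel in the oscillatory regime
`−2√(1−c²) < β < 2√(1−c²)`, with `β = 2(ω²−σ²)` and `1−c² = (σ²+ω²)²`. -/
theorem kernel_formula_oscillatory (σ ω : ℝ) (hσ : 0 < σ) (hω : 0 < ω) (x : ℝ) :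
    ∫ ξ : ℝ, Real.cos (x * ξ)
        / (ξ ^ 4 - 2 * (ω ^ 2 - σ ^ 2) * ξ ^ 2 + (σ ^ 2 + ω ^ 2) ^ 2)
      = Real.pi * Real.exp (-σ * |x|) / (2 * σ * ω * (σ ^ 2 + ω ^ 2))
        * (ω * Real.cos (ω * x) + σ * Real.sin (ω * |x|)) := by
  have hC : (0:ℝ) < 4*σ*ω*(σ^2+ω^2) := by positivity
  have hf := Integrable.fourierInv_fourier_eq (f_int (ω := ω) hσ) (fourier_f_int hσ hω)
    (v := x) ((f_cont σ ω).continuousAt)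
  rw [Real.fourierInv_eq_fourier_neg,
    Real.fourier_real_eq_integral_exp_smul] at hf
  simp only [fourier_f hσ, smul_eq_mul] at hf
  have hInt : Integrable (fun v : ℝ =>
      Complex.exp (↑(-2*π*v*(-x)) * I) * ((4*σ*ω*(σ^2+ω^2) / D σ ω (2*π*v) : ℝ) : ℂ)) := by
    refine Integrable.bdd_mul ((int_aux hσ hω).ofReal) ?_ (c := 1) (ae_of_all _ fun v => ?_)
    · exact (Complex.continuous_exp.comp (by fun_prop)).aestronglyMeasurable
    · rw [Complex.norm_exp]
      simp
  have hre := congrArg Complex.re hf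
  rw [← RCLike.re_to_complex, ← integral_re hInt] at hre
  simp only [RCLike.re_to_complex, Complex.mul_re, Complex.exp_ofReal_mul_I_re, Complex.exp_ofReal_mul_I_im,
    Complex.ofReal_re, Complex.ofReal_im, mul_zero, sub_zero] at hre
  rw [f_re] at hre
  -- hre : ∫ v, cos (-2πv(-x)) * (C / D (2πv)) = exp(-σ|x|) (ω cos ωx + σ sin ω|x|)
  have hcv := MeasureTheory.Measure.integral_comp_mul_left
    (fun t : ℝ => Real.cos (x*t) / D σ ω t) (2*π)
  have hrw : (fun v : ℝ => Real.cos (-2*π*v*(-x)) * (4*σ*ω*(σ^2+ω^2) / D σ ω (2*π*v)))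
      = fun v : ℝ => (4*σ*ω*(σ^2+ω^2)) * (Real.cos (x*(2*π*v)) / D σ ω (2*π*v)) := by
    funext v
    rw [show -2*π*v*(-x) = x*(2*π*v) by ring]
    ring
  rw [hrw, integral_const_mul] at hre
  rw [hcv] at hre
  have hπ : (0:ℝ) < π := Real.pi_pos
  have habs : |(2*π)⁻¹| = (2*π)⁻¹ := abs_of_pos (by positivity)
  rw [habs, smul_eq_mul] at hre
  show (∫ ξ : ℝ, Real.cos (x*ξ) / D σ ω ξ) = _
  have := hre
  field_simp at this ⊢
  nlinarith [this, Real.exp_pos (-σ*|x|), sq_nonneg (Real.cos (ω*x)), hπ]
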